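/- Let ρ > 0 and T > 0. Then ∫_{ℝ^2} f_2(x_1, x_2)^2 dx_1 dx_2 = T/ρ + (e^{−2ρT} − 1)/(2ρ^2), where the integral is with respect to two-dimensional Lebesgue measure. -/

import Mathlib

open Real MeasureTheory

/-- The second chaos kernel of the quadratic functional of the Ornstein–Uhlenbeck Lévy
process. -/
noncomputable def ouKernel (ρ T x₁ x₂ : ℝ) : ℝ :=
  (if x₁ ≤ T then (1 : ℝ) else 0) * (if x₂ ≤ T then (1 : ℝ) else 0) *
    Real.exp (ρ * (x₁ + x₂)) *
    ((1 - Real.exp (-2 * ρ * T)) * (if max x₁ x₂ ≤ 0 then (1 : ℝ) else 0) +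
      (Real.exp (-2 * ρ * max x₁ x₂) - Real.exp (-2 * ρ * T)) *
        (if 0 < max x₁ x₂ then (1 : ℝ) else 0))

/-!
On `(-∞, T]²` the squared kernel is `e^{2ρ(x+y)} (e^{-2ρ max(x, y, 0)} - e^{-2ρT})²`, and Fubini
reduces its integral to two one-dimensional ones of the same shape: left of a threshold
(`max x 0` for the inner integral, `0` for the outer one) the integrand is a constant multiple
of `e^{2ρ t}`, whose tail integral is explicit, and between the threshold and `T` it has an
elementary primitive. The same description gives the integrability needed for Fubini.
-/

open Set

theorem hasDerivAt_exp_mul (a y : ℝ) : HasDerivAt (fun y => exp (a * y)) (a * exp (a * y)) y := by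
  simpa [mul_comm] using ((hasDerivAt_id y).const_mul a).exp

section ExpTail

variable {a c T K : ℝ} {f F : ℝ → ℝ}

theorem integrableOn_Iic_of_eqOn_const_mul_exp (ha : 0 < a) (hf : Continuous f)
    (hleft : EqOn f (fun x => K * exp (a * x)) (Iic c)) (T : ℝ) : IntegrableOn f (Iic T) := by
  have hIic : IntegrableOn f (Iic c) :=
    IntegrableOn.congr_fun ((integrableOn_exp_mul_Iic ha c).const_mul K) hleft.symm
      measurableSet_Iic
  refine (hIic.union (hf.integrableOn_Icc (a := c) (b := T))).mono_set fun x hx => ?_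
  rcases le_total x c with h | h
  · exact Or.inl h
  · exact Or.inr ⟨h, hx⟩

theorem setIntegral_Iic_of_eqOn_const_mul_exp (ha : 0 < a) (hcT : c ≤ T) (hf : Continuous f)
    (hleft : EqOn f (fun x => K * exp (a * x)) (Iic c))
    (hF : ∀ x ∈ Icc c T, HasDerivAt F (f x) x) :
    ∫ x in Iic T, f x = K * exp (a * c) / a + (F T - F c) := by
  have hsplit := intervalIntegral.integral_Iic_sub_Iic
    (integrableOn_Iic_of_eqOn_const_mul_exp ha hf hleft c)
    (integrableOn_Iic_of_eqOn_const_mul_exp ha hf hleft T)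
  have hleft_int : ∫ x in Iic c, f x = K * exp (a * c) / a := by
    rw [setIntegral_congr_fun measurableSet_Iic hleft, integral_const_mul,
      integral_exp_mul_Iic ha, mul_div_assoc]
  have hright : ∫ x in c..T, f x = F T - F c :=
    intervalIntegral.integral_eq_sub_of_hasDerivAt (fun x hx => hF x (uIcc_of_le hcT ▸ hx))
      (hf.intervalIntegrable c T)
  linarith

end ExpTail

noncomputable def ouKernelSq (a T x y : ℝ) : ℝ :=
  exp (a * (x + y)) * (exp (-(a * max (max x y) 0)) - exp (-(a * T))) ^ 2

theorem ouKernel_sq_eq_indicator (ρ T x y : ℝ) :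
    ouKernel ρ T x y ^ 2 =
      (Iic T ×ˢ Iic T).indicator (fun p => ouKernelSq (2 * ρ) T p.1 p.2) (x, y) := by
  have hbracket : (1 - exp (-2 * ρ * T)) * (if max x y ≤ 0 then (1 : ℝ) else 0) +
      (exp (-2 * ρ * max x y) - exp (-2 * ρ * T)) * (if 0 < max x y then (1 : ℝ) else 0) =
      exp (-(2 * ρ * max (max x y) 0)) - exp (-(2 * ρ * T)) := by
    rcases le_or_gt (max x y) 0 with h | h
    · simp [h, not_lt.2 h]
    · simp [h, not_le.2 h, max_eq_left h.le]
  rw [ouKernel, hbracket, indicator_apply]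
  by_cases hxy : x ≤ T ∧ y ≤ T
  · rw [if_pos hxy.1, if_pos hxy.2, if_pos (show (x, y) ∈ Iic T ×ˢ Iic T from hxy), ouKernelSq,
      one_mul, one_mul, mul_pow, ← exp_nat_mul]
    ring_nf
  · rw [if_neg (show (x, y) ∉ Iic T ×ˢ Iic T from hxy)]
    rcases not_and_or.1 hxy with h | h <;> simp [h]

theorem continuous_ouKernelSq (a T x : ℝ) : Continuous (ouKernelSq a T x) := by
  unfold ouKernelSq
  fun_prop

theorem ouKernelSq_eqOn_Iic (a T x : ℝ) :
    EqOn (ouKernelSq a T x)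
      (fun y => (exp (-(a * max x 0)) - exp (-(a * T))) ^ 2 * exp (a * x) * exp (a * y))
      (Iic (max x 0)) := by
  intro y hy
  have hmax : max (max x y) 0 = max x 0 := by
    rw [max_right_comm]
    exact max_eq_left hy
  simp only [ouKernelSq, hmax, mul_add, exp_add]
  ring

noncomputable def ouKernelSqMarginal (a T x : ℝ) : ℝ :=
  exp (a * x) * (2 * (exp (-(a * max x 0)) - exp (-(a * T))) / a -
    2 * exp (-(a * T)) * (T - max x 0))

theorem setIntegral_ouKernelSq {a T x : ℝ} (ha : 0 < a) (hx : x ≤ T) (hT : 0 ≤ T) :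
    ∫ y in Iic T, ouKernelSq a T x y = ouKernelSqMarginal a T x := by
  rw [setIntegral_Iic_of_eqOn_const_mul_exp ha (max_le hx hT) (continuous_ouKernelSq a T x)
    (ouKernelSq_eqOn_Iic a T x) (F := fun y => exp (a * x) *
      (-exp (-a * y) / a - 2 * exp (-(a * T)) * y + exp (-(a * T)) ^ 2 * exp (a * y) / a))
    (fun y hy => ?_)]
  · have hET : exp (-(a * T)) * exp (a * T) = 1 := by rw [← exp_add]; simp
    unfold ouKernelSqMarginal
    generalize exp (-(a * T)) = E at hET ⊢
    simp only [neg_mul, exp_neg]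
    field_simp
    linear_combination exp (a * max x 0) * (E * exp (a * T) + 1) * hET
  · have hmax : max (max x y) 0 = y := by
      rw [max_right_comm]; exact max_eq_right hy.1
    refine ((((hasDerivAt_exp_mul (-a) y).neg.div_const a).sub
      ((hasDerivAt_id y).const_mul (2 * exp (-(a * T))))).add
      ((hasDerivAt_exp_mul a y).const_mul (exp (-(a * T)) ^ 2) |>.div_const a)
      |>.const_mul (exp (a * x))).congr_deriv ?_
    simp only [ouKernelSq, hmax]
    generalize exp (-(a * T)) = E
    simp only [mul_add, exp_add, neg_mul, exp_neg]
    field_simp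
    ring

theorem continuous_ouKernelSqMarginal (a T : ℝ) : Continuous (ouKernelSqMarginal a T) := by
  unfold ouKernelSqMarginal
  fun_prop

theorem ouKernelSqMarginal_eqOn_Iic (a T : ℝ) :
    EqOn (ouKernelSqMarginal a T)
      (fun x => (2 * (1 - exp (-(a * T))) / a - 2 * exp (-(a * T)) * T) * exp (a * x))
      (Iic 0) := by
  intro x hx
  simp only [ouKernelSqMarginal, max_eq_right (show x ≤ 0 from hx), mul_zero, neg_zero, exp_zero,
    sub_zero]
  ring

theorem setIntegral_ouKernelSqMarginal {a T : ℝ} (ha : 0 < a) (hT : 0 ≤ T) :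
    ∫ x in Iic T, ouKernelSqMarginal a T x = 2 * T / a + 2 * (exp (-(a * T)) - 1) / a ^ 2 := by
  rw [setIntegral_Iic_of_eqOn_const_mul_exp ha hT (continuous_ouKernelSqMarginal a T)
    (ouKernelSqMarginal_eqOn_Iic a T) (F := fun x => 2 * x / a -
      2 * exp (-(a * T)) * exp (a * x) * (2 / a ^ 2 + (T - x) / a))
    (fun x hx => ?_)]
  · have hET : exp (-(a * T)) * exp (a * T) = 1 := by rw [← exp_add]; simp
    generalize exp (-(a * T)) = E at hET ⊢
    simp only [mul_zero, exp_zero]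
    field_simp
    linear_combination -4 * hET
  · refine ((((hasDerivAt_id x).const_mul 2).div_const a).sub
      (((hasDerivAt_exp_mul a x).const_mul (2 * exp (-(a * T)))).mul
        ((((hasDerivAt_id x).const_sub T).div_const a).const_add (2 / a ^ 2)))).congr_deriv ?_
    simp only [ouKernelSqMarginal, max_eq_left hx.1]
    generalize exp (-(a * T)) = E
    simp only [id_eq, exp_neg]
    field_simp
    ring

theorem integrableOn_ouKernelSq {a T : ℝ} (ha : 0 < a) (hT : 0 ≤ T) :
    IntegrableOn (fun p : ℝ × ℝ => ouKernelSq a T p.1 p.2) (Iic T ×ˢ Iic T) := by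
  have hmeas : Continuous fun p : ℝ × ℝ => ouKernelSq a T p.1 p.2 := by
    unfold ouKernelSq
    fun_prop
  rw [IntegrableOn, Measure.volume_eq_prod, ← Measure.prod_restrict,
    integrable_prod_iff hmeas.aestronglyMeasurable]
  constructor
  · filter_upwards with x
    exact integrableOn_Iic_of_eqOn_const_mul_exp ha (continuous_ouKernelSq a T x)
      (ouKernelSq_eqOn_Iic a T x) T
  · refine IntegrableOn.congr_fun (integrableOn_Iic_of_eqOn_const_mul_exp ha
      (continuous_ouKernelSqMarginal a T) (ouKernelSqMarginal_eqOn_Iic a T) T)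
      (fun x hx => ?_) measurableSet_Iic
    rw [← setIntegral_ouKernelSq ha hx hT]
    congr with y
    exact (Real.norm_of_nonneg (by unfold ouKernelSq; positivity)).symm

theorem stmt_9 (ρ T : ℝ) (hρ : 0 < ρ) (hT : 0 < T) :
    (∫ p : ℝ × ℝ, (ouKernel ρ T p.1 p.2) ^ 2) =
      T / ρ + (Real.exp (-2 * ρ * T) - 1) / (2 * ρ ^ 2) := by
  have ha : 0 < 2 * ρ := by positivity
  simp_rw [ouKernel_sq_eq_indicator]
  rw [integral_indicator (measurableSet_Iic.prod measurableSet_Iic), Measure.volume_eq_prod,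
    setIntegral_prod _ (integrableOn_ouKernelSq ha hT.le),
    setIntegral_congr_fun measurableSet_Iic fun x hx => setIntegral_ouKernelSq ha hx hT.le,
    setIntegral_ouKernelSqMarginal ha hT.le, neg_mul, neg_mul]
  field_simp
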